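/- arXiv:2505.11846 — 3 statements merged into one kernel-verified Lean document; each statement's English description precedes it below -/
import Mathlib

section
/- Let A ∈ GL_{n}(ℚ) be an integer matrix with nonzero determinant. Then the system of equations λ_1^{A[i,1]} λ_2^{A[i,2]} ⋯ λ_n^{A[i,n]} = 1 for i = 1,…,n has only finitely many solutions (λ_1,…,λ_n) ∈ (ℂ \ {0})^n. Moreover, the number of solutions equals |det(A)|. -/
open Matrix

section aux

variable {n : ℕ}

lemma aux_injective (A : Matrix (Fin n) (Fin n) ℤ) (hA : A.det ≠ 0) :
    Function.Injective (Matrix.toLin' A) := by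
  intro x y hxy
  have h : A.mulVec (x - y) = 0 := by
    have : A.mulVec x = A.mulVec y := by simpa [Matrix.toLin'_apply] using hxy
    simp [Matrix.mulVec_sub, this]
  have := Matrix.eq_zero_of_mulVec_eq_zero hA h
  exact sub_eq_zero.mp this

lemma aux_card (A : Matrix (Fin n) (Fin n) ℤ) (hA : A.det ≠ 0) :
    Nat.card ((Fin n → ℤ) ⧸ LinearMap.range (Matrix.toLin' Aᵀ)) = A.det.natAbs := by
  classical
  set b : Module.Basis (Fin n) ℤ (Fin n → ℤ) := Pi.basisFun ℤ (Fin n) with hb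
  set φ : (Fin n → ℤ) →ₗ[ℤ] (Fin n → ℤ) := Matrix.toLin' Aᵀ with hφ
  have hinj : Function.Injective φ := aux_injective Aᵀ (by rwa [Matrix.det_transpose])
  set N : Submodule ℤ (Fin n → ℤ) := LinearMap.range φ with hN
  -- basis of N coming from the rows of A
  let eN : (Fin n → ℤ) ≃ₗ[ℤ] N := LinearEquiv.ofInjective φ hinj
  let bN : Module.Basis (Fin n) ℤ N := b.map eN
  -- the determinant of this basis is A.det
  have hdet : b.det ((↑) ∘ bN) = A.det := by
    rw [Module.Basis.det_apply]
    have : b.toMatrix ((↑) ∘ bN) = Aᵀ := by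
      ext i j
      simp only [Module.Basis.toMatrix_apply, Function.comp_apply]
      have : ((bN j : Fin n → ℤ)) = φ (b j) := rfl
      rw [this]
      simp [hφ, hb, Matrix.toLin'_apply, Matrix.mulVec_single]
    rw [this, Matrix.det_transpose]
  -- any basis of N has the same |det|
  have hsame : ∀ b1 b2 : Module.Basis (Fin n) ℤ N,
      (b.det ((↑) ∘ b1)).natAbs = (b.det ((↑) ∘ b2)).natAbs := by
    intro b1 b2
    have h1 := Module.Basis.det_comp_basis b1 b (N.subtype)
    have h2 := Module.Basis.det_comp_basis b2 b (N.subtype)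
    have : (⇑(N.subtype) ∘ ⇑b1) = ((↑) ∘ b1) := rfl
    rw [this] at h1
    have : (⇑(N.subtype) ∘ ⇑b2) = ((↑) ∘ b2) := rfl
    rw [this] at h2
    rw [h1, h2]
    exact Int.natAbs_eq_iff_associated.mpr
      (LinearMap.associated_det_comp_equiv _ _ _)
  -- Smith normal form
  obtain ⟨m, snf⟩ := N.smithNormalForm b
  have hm : m = n := by
    have h1 : Module.finrank ℤ N = m := Module.finrank_eq_card_basis snf.bN |>.trans (by simp)
    have h2 : Module.finrank ℤ N = n := Module.finrank_eq_card_basis bN |>.trans (by simp)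
    rw [h1] at h2; exact h2
  have hm' : n = m := hm.symm
  clear hm
  subst hm'
  have hindex := snf.toAddSubgroup_index_eq_pow_mul_prod
  have hcard : Nat.card ((Fin n → ℤ) ⧸ N) = N.toAddSubgroup.index := rfl
  rw [hcard, hindex]
  simp only [Fintype.card_fin, Nat.sub_self, pow_zero, one_mul]
  have hspan : ∀ i : Fin n, (Ideal.span {snf.a i}).toAddSubgroup.index = (snf.a i).natAbs := by
    intro i
    rw [Ideal.span_singleton_toAddSubgroup_eq_zmultiples, Int.index_zmultiples]
  rw [Finset.prod_congr rfl fun i _ => hspan i]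
  -- compute the det of the snf basis
  have hfbij : Function.Bijective snf.f :=
    (Fintype.bijective_iff_injective_and_card snf.f).mpr ⟨snf.f.injective, by simp⟩
  let ef : Fin n ≃ Fin n := Equiv.ofBijective snf.f hfbij
  have hsnfdet : (b.det ((↑) ∘ snf.bN)).natAbs = ∏ i, (snf.a i).natAbs := by
    rw [Module.Basis.det_apply]
    have hmat : b.toMatrix ((↑) ∘ snf.bN) = (b.toMatrix (⇑snf.bM ∘ ⇑ef)) * Matrix.diagonal snf.a := by
      ext i j
      simp only [Module.Basis.toMatrix_apply, Function.comp_apply, Matrix.mul_diagonal]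
      have : ((snf.bN j : Fin n → ℤ)) = snf.a j • snf.bM (snf.f j) := snf.snf j
      rw [this, LinearEquiv.map_smul]
      simp [ef, Equiv.ofBijective_apply, mul_comm]
    rw [hmat, Matrix.det_mul, Matrix.det_diagonal, Int.natAbs_mul]
    have hunit : IsUnit (b.toMatrix (⇑snf.bM ∘ ⇑ef)).det := by
      have : ⇑snf.bM ∘ ⇑ef = ⇑(snf.bM.reindex ef.symm) := by
        ext i; simp
      rw [this, ← Module.Basis.det_apply]
      exact b.isUnit_det _
    have : (b.toMatrix (⇑snf.bM ∘ ⇑ef)).det.natAbs = 1 := by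
      rcases Int.isUnit_iff.mp hunit with h | h <;> simp [h]
    rw [this, one_mul]
    exact map_prod Int.natAbsHom snf.a Finset.univ
  rw [← hsnfdet, hsame snf.bN bN, hdet]

end aux
open Matrix

section equivpart

variable {n : ℕ}

noncomputable def auxEquiv (A : Matrix (Fin n) (Fin n) ℤ) :
    {l : Fin n → ℂˣ | ∀ i : Fin n, (∏ j : Fin n, l j ^ A i j) = 1} ≃
      (((Fin n → ℤ) ⧸ LinearMap.range (Matrix.toLin' Aᵀ)) →ₗ[ℤ] Additive ℂˣ) where
  toFun := fun ⟨l, hl⟩ => by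
    refine Submodule.liftQ _ ((Pi.basisFun ℤ (Fin n)).constr ℤ fun j => Additive.ofMul (l j)) ?_
    rintro x ⟨y, rfl⟩
    rw [LinearMap.mem_ker, ← LinearMap.comp_apply]
    have : ((Pi.basisFun ℤ (Fin n)).constr ℤ fun j => Additive.ofMul (l j)) ∘ₗ
        Matrix.toLin' Aᵀ = 0 := by
      apply (Pi.basisFun ℤ (Fin n)).ext
      intro i
      simp only [LinearMap.comp_apply, LinearMap.zero_apply]
      have h1 : Matrix.toLin' Aᵀ (Pi.basisFun ℤ (Fin n) i) = fun j => A i j := by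
        ext j
        simp [Matrix.toLin'_apply, Matrix.mulVec_single, Pi.basisFun_apply]
      rw [h1]
      have h2 : (fun j => A i j) = ∑ j : Fin n, A i j • Pi.basisFun ℤ (Fin n) j := by
        ext k
        simp [Pi.basisFun_apply, Pi.single_apply]
      rw [h2, map_sum]
      simp only [_root_.map_smul, Module.Basis.constr_basis]
      have : ∑ j : Fin n, A i j • Additive.ofMul (l j)
          = Additive.ofMul (∏ j : Fin n, l j ^ A i j) := by
        rw [ofMul_prod]
        exact Finset.sum_congr rfl fun j _ => (ofMul_zpow _ _).symm
      rw [this, hl i, ofMul_one]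
    rw [this]
    rfl
  invFun := fun g =>
    ⟨fun j => Additive.toMul (g (Submodule.Quotient.mk (Pi.basisFun ℤ (Fin n) j))), by
      intro i
      have h2 : (fun j => A i j) = ∑ j : Fin n, A i j • Pi.basisFun ℤ (Fin n) j := by
        ext k
        simp [Pi.basisFun_apply, Pi.single_apply]
      have hmem : (fun j => A i j) ∈ LinearMap.range (Matrix.toLin' Aᵀ) := by
        refine ⟨Pi.single i 1, ?_⟩
        ext j
        simp [Matrix.toLin'_apply, Matrix.mulVec_single]
      have : ∏ j : Fin n, (Additive.toMul (g (Submodule.Quotient.mk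
          (Pi.basisFun ℤ (Fin n) j)))) ^ A i j
          = Additive.toMul (∑ j : Fin n, A i j • g (Submodule.Quotient.mk
            (Pi.basisFun ℤ (Fin n) j))) := by
        rw [toMul_sum]
        exact Finset.prod_congr rfl fun j _ => (toMul_zsmul _ _).symm
      rw [this]
      simp only [← _root_.map_smul, ← map_sum]
      have : (∑ j : Fin n, A i j • (Submodule.Quotient.mk (Pi.basisFun ℤ (Fin n) j)) :
          (Fin n → ℤ) ⧸ LinearMap.range (Matrix.toLin' Aᵀ))
          = Submodule.Quotient.mk (∑ j : Fin n, A i j • Pi.basisFun ℤ (Fin n) j) := by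
        simp only [← Submodule.mkQ_apply, ← _root_.map_smul, ← map_sum]
      rw [this, ← h2, (Submodule.Quotient.mk_eq_zero _).mpr hmem, map_zero]
      rfl⟩
  left_inv := by
    rintro ⟨l, hl⟩
    ext j
    simp only [Submodule.liftQ_apply, Module.Basis.constr_basis]
    rfl
  right_inv := by
    intro g
    apply Submodule.linearMap_qext
    apply (Pi.basisFun ℤ (Fin n)).ext
    intro j
    simp only [LinearMap.comp_apply, Submodule.mkQ_apply, Submodule.liftQ_apply,
      Module.Basis.constr_basis]
    rfl

end equivpart

/-- Let `A` be an `n × n` integer matrix with nonzero determinant. The system of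
monomial equations `∏_j λ_j ^ A[i,j] = 1` (for `i = 1, …, n`) has only finitely
many solutions in the algebraic torus `(ℂ*)ⁿ`, and the number of solutions is
exactly `|det A|`. -/
theorem stmt_4 (n : ℕ) (A : Matrix (Fin n) (Fin n) ℤ) (hA : A.det ≠ 0) :
    {l : Fin n → ℂˣ | ∀ i : Fin n, (∏ j : Fin n, l j ^ A i j) = 1}.Finite ∧
    Nat.card {l : Fin n → ℂˣ | ∀ i : Fin n, (∏ j : Fin n, l j ^ A i j) = 1}
      = A.det.natAbs := by
  set G := (Fin n → ℤ) ⧸ LinearMap.range (Matrix.toLin' Aᵀ) with hG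
  have hcard : Nat.card G = A.det.natAbs := aux_card A hA
  have hfinG : Finite G :=
    Nat.finite_of_card_ne_zero (by rw [hcard]; exact Int.natAbs_ne_zero.mpr hA)
  haveI : Finite (Multiplicative G) := Finite.of_equiv G Multiplicative.ofAdd
  haveI : NeZero ((Monoid.exponent (Multiplicative G) : ℕ) : ℂ) :=
    ⟨Nat.cast_ne_zero.mpr Monoid.exponent_ne_zero_of_finite⟩
  obtain ⟨e4⟩ := CommGroup.monoidHom_mulEquiv_of_hasEnoughRootsOfUnity (Multiplicative G) ℂ
  let e2 : (G →ₗ[ℤ] Additive ℂˣ) ≃ (Multiplicative G →* ℂˣ) :=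
    { toFun := fun f => AddMonoidHom.toMultiplicativeLeft f.toAddMonoidHom
      invFun := fun ψ => (AddMonoidHom.toMultiplicativeLeft.symm ψ).toIntLinearMap
      left_inv := fun f => by ext x; rfl
      right_inv := fun ψ => by ext x; rfl }
  let E : {l : Fin n → ℂˣ | ∀ i : Fin n, (∏ j : Fin n, l j ^ A i j) = 1} ≃ Multiplicative G :=
    (auxEquiv A).trans (e2.trans e4.toEquiv)
  have hfinS : Finite {l : Fin n → ℂˣ | ∀ i : Fin n, (∏ j : Fin n, l j ^ A i j) = 1} :=
    Finite.of_equiv _ E.symm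
  refine ⟨Set.toFinite _, ?_⟩
  rw [Nat.card_congr E, Nat.card_congr (Multiplicative.toAdd (α := G)), hcard]
end

section
/- Let σ : ℝ → ℝ be a polynomial of degree r > 2 whose two leading coefficients are nonzero, let u_1, u_2, u_3 ∈ ℝ \ {0} and λ_1, λ_2, λ_3 ∈ ℝ satisfy λ_3 u_3 σ(λ_2 u_2 σ(λ_1 u_1 x)) = u_3 σ(u_2 σ(u_1 x)) for all x ∈ ℝ. Then λ_1 = λ_2 = λ_3 = 1. -/
open Polynomial

lemma aux_coeff_comp_sum (σ q : ℝ[X]) (k : ℕ) :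
    (σ.comp q).coeff k = ∑ i ∈ Finset.range (σ.natDegree + 1), σ.coeff i * (q ^ i).coeff k := by
  rw [Polynomial.comp, Polynomial.eval₂_eq_sum_range]
  simp [Polynomial.finset_sum_coeff, Polynomial.coeff_C_mul]

lemma aux_coeff_comp_C_mul_X (p : ℝ[X]) (c : ℝ) (k : ℕ) :
    (p.comp (Polynomial.C c * Polynomial.X)).coeff k = c ^ k * p.coeff k := by
  rw [aux_coeff_comp_sum]
  have h : ∀ i : ℕ, ((Polynomial.C c * Polynomial.X : ℝ[X]) ^ i).coeff k
      = if i = k then c ^ k else 0 := by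
    intro i
    rw [mul_pow, ← Polynomial.C_pow, Polynomial.coeff_C_mul, Polynomial.coeff_X_pow]
    by_cases h : i = k
    · simp [h]
    · simp [h, Ne.symm h]
  simp only [h, mul_ite, mul_zero, Finset.sum_ite_eq', Finset.mem_range]
  by_cases hk : k < p.natDegree + 1
  · simp [hk, mul_comm]
  · simp only [hk, if_false]
    rw [Polynomial.coeff_eq_zero_of_natDegree_lt (by omega), mul_zero]

lemma aux_coeff_mul_top_sub_one (f g : ℝ[X]) {a b : ℕ} (ha : 1 ≤ a) (hb : 1 ≤ b)
    (hf : f.natDegree ≤ a) (hg : g.natDegree ≤ b) :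
    (f * g).coeff (a + b - 1) = f.coeff a * g.coeff (b - 1) + f.coeff (a - 1) * g.coeff b := by
  classical
  rw [Polynomial.coeff_mul]
  have hsub : ({(a, b-1), (a-1, b)} : Finset (ℕ × ℕ)) ⊆ Finset.HasAntidiagonal.antidiagonal (a + b - 1) := by
    intro x hx
    simp only [Finset.mem_insert, Finset.mem_singleton] at hx
    rcases hx with h | h <;> subst h <;> rw [Finset.HasAntidiagonal.mem_antidiagonal] <;> omega
  rw [← Finset.sum_subset hsub ?hzero]
  · rw [Finset.sum_pair (by intro h; injection h with h1 h2; omega)]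
  case hzero =>
    intro x hx hnx
    obtain ⟨x1, x2⟩ := x
    rw [Finset.HasAntidiagonal.mem_antidiagonal] at hx
    simp only [Finset.mem_insert, Finset.mem_singleton, Prod.mk.injEq, not_or, not_and_or] at hnx
    simp only at hx ⊢
    rcases lt_or_ge a x1 with h | h
    · rw [Polynomial.coeff_eq_zero_of_natDegree_lt (by omega), zero_mul]
    · rcases lt_or_ge b x2 with h' | h'
      · rw [show g.coeff x2 = 0 from Polynomial.coeff_eq_zero_of_natDegree_lt (by omega), mul_zero]
      · exfalso; omega

lemma aux_coeff_pow_sub_one (p : ℝ[X]) {m : ℕ} (hm : 1 ≤ m) (hp : p.natDegree ≤ m) :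
    ∀ n, 1 ≤ n → (p ^ n).coeff (n * m - 1) = n * p.coeff m ^ (n - 1) * p.coeff (m - 1) := by
  intro n hn
  induction n, hn using Nat.le_induction with
  | base => simp
  | succ n hn ih =>
    have hpn : (p ^ n).natDegree ≤ n * m :=
      Polynomial.natDegree_pow_le.trans (Nat.mul_le_mul_left n hp)
    have hk : (n + 1) * m - 1 = n * m + m - 1 := by ring_nf
    rw [pow_succ, hk, aux_coeff_mul_top_sub_one _ _ (by nlinarith) hm hpn hp,
      Polynomial.coeff_pow_of_natDegree_le hp, ih]
    have h1 : n - 1 + 1 = n := by omega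
    have h2 : p.coeff m ^ (n - 1) * p.coeff m = p.coeff m ^ n := by
      rw [← pow_succ, h1]
    push_cast
    linear_combination (n : ℝ) * p.coeff (m - 1) * h2

lemma aux_coeff_comp_top2 (σ q : ℝ[X]) {m k : ℕ} (h2 : 2 ≤ σ.natDegree)
    (hq : q.natDegree ≤ m) (hk : (σ.natDegree - 2) * m < k) :
    (σ.comp q).coeff k = σ.coeff σ.natDegree * (q ^ σ.natDegree).coeff k
      + σ.coeff (σ.natDegree - 1) * (q ^ (σ.natDegree - 1)).coeff k := by
  set r := σ.natDegree with hr
  rw [aux_coeff_comp_sum]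
  have hre : r + 1 = (r - 1) + 1 + 1 := by omega
  have hre2 : r - 1 + 1 = r := by omega
  rw [hre, Finset.sum_range_succ, Finset.sum_range_succ, hre2]
  have hzero : ∑ i ∈ Finset.range (r - 1), σ.coeff i * (q ^ i).coeff k = 0 := by
    apply Finset.sum_eq_zero
    intro i hi
    simp only [Finset.mem_range] at hi
    have hd : (q ^ i).natDegree < k := by
      calc (q ^ i).natDegree ≤ i * q.natDegree := Polynomial.natDegree_pow_le
        _ ≤ (r - 2) * m := Nat.mul_le_mul (by omega) hq
        _ < k := hk
    rw [Polynomial.coeff_eq_zero_of_natDegree_lt hd, mul_zero]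
  rw [hzero]
  ring

/-- Rigidity lemma, depth 3: let `σ` be a real polynomial of degree `r > 2` whose
two leading coefficients are nonzero. If `u₁, u₂, u₃ ≠ 0` and
`λ₃ u₃ σ(λ₂ u₂ σ(λ₁ u₁ x)) = u₃ σ(u₂ σ(u₁ x))` for all `x`, then
`λ₁ = λ₂ = λ₃ = 1`. -/
theorem stmt_7 (σ : Polynomial ℝ) (hr : 2 < σ.natDegree)
    (hlead : σ.coeff σ.natDegree ≠ 0) (hsub : σ.coeff (σ.natDegree - 1) ≠ 0)
    (u₁ u₂ u₃ : ℝ) (hu₁ : u₁ ≠ 0) (hu₂ : u₂ ≠ 0) (hu₃ : u₃ ≠ 0)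
    (l₁ l₂ l₃ : ℝ)
    (heq : ∀ x : ℝ,
      l₃ * (u₃ * σ.eval (l₂ * (u₂ * σ.eval (l₁ * (u₁ * x)))))
        = u₃ * σ.eval (u₂ * σ.eval (u₁ * x))) :
    l₁ = 1 ∧ l₂ = 1 ∧ l₃ = 1 := by
  classical
  obtain ⟨s, hs⟩ : ∃ s : ℕ, σ.natDegree = s + 1 := ⟨σ.natDegree - 1, by omega⟩
  set r := σ.natDegree with hrdef
  set A := l₁ * u₁ with hA
  set B := l₂ * u₂ with hB
  set τ₁ : ℝ[X] := σ.comp (C A * X) with hτ₁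
  set τ₂ : ℝ[X] := σ.comp (C u₁ * X) with hτ₂
  set q₁ : ℝ[X] := C B * τ₁ with hq₁
  set q₂ : ℝ[X] := C u₂ * τ₂ with hq₂
  have hP : C (l₃ * u₃) * σ.comp q₁ = C u₃ * σ.comp q₂ := by
    apply Polynomial.funext
    intro x
    simp only [hq₁, hq₂, hτ₁, hτ₂, Polynomial.eval_mul, Polynomial.eval_C,
      Polynomial.eval_comp, Polynomial.eval_X]
    simpa [hA, hB, mul_assoc] using heq x
  -- degree bounds
  have hCXdeg : ∀ c : ℝ, (C c * X : ℝ[X]).natDegree ≤ 1 :=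
    fun c => (Polynomial.natDegree_C_mul_le c X).trans Polynomial.natDegree_X_le
  have hτdeg : ∀ c : ℝ, (σ.comp (C c * X)).natDegree ≤ r := by
    intro c
    refine Polynomial.natDegree_comp_le.trans ?_
    calc σ.natDegree * (C c * X : ℝ[X]).natDegree ≤ r * 1 :=
          Nat.mul_le_mul_left r (hCXdeg c)
      _ = r := mul_one r
  have hq₁deg : q₁.natDegree ≤ r := (Polynomial.natDegree_C_mul_le B τ₁).trans (hτdeg A)
  have hq₂deg : q₂.natDegree ≤ r := (Polynomial.natDegree_C_mul_le u₂ τ₂).trans (hτdeg u₁)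
  -- coefficients of q's
  have hq₁r : q₁.coeff r = B * (A ^ r * σ.coeff r) := by
    rw [hq₁, Polynomial.coeff_C_mul, hτ₁, aux_coeff_comp_C_mul_X]
  have hq₁r1 : q₁.coeff (r - 1) = B * (A ^ (r-1) * σ.coeff (r-1)) := by
    rw [hq₁, Polynomial.coeff_C_mul, hτ₁, aux_coeff_comp_C_mul_X]
  have hq₂r : q₂.coeff r = u₂ * (u₁ ^ r * σ.coeff r) := by
    rw [hq₂, Polynomial.coeff_C_mul, hτ₂, aux_coeff_comp_C_mul_X]
  have hq₂r1 : q₂.coeff (r - 1) = u₂ * (u₁ ^ (r-1) * σ.coeff (r-1)) := by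
    rw [hq₂, Polynomial.coeff_C_mul, hτ₂, aux_coeff_comp_C_mul_X]
  have hr2 : 2 ≤ r := le_of_lt hr
  have hr1 : 1 ≤ r := by omega
  have hcoeff : ∀ k, (l₃ * u₃) * (σ.comp q₁).coeff k = u₃ * (σ.comp q₂).coeff k := by
    intro k
    have := congrArg (fun p => Polynomial.coeff p k) hP
    simpa only [Polynomial.coeff_C_mul] using this
  -- E1 : coefficient at r * r
  have hE1 : (l₃ * u₃) * (σ.coeff r * (B * (A ^ r * σ.coeff r)) ^ r)
      = u₃ * (σ.coeff r * (u₂ * (u₁ ^ r * σ.coeff r)) ^ r) := by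
    have h := hcoeff (r * r)
    have hklt : (r - 2) * r < r * r := by
      have : (r - 2) * r < r * r ↔ r - 2 < r := Nat.mul_lt_mul_right (by omega)
      exact this.mpr (by omega)
    rw [aux_coeff_comp_top2 σ q₁ hr2 hq₁deg hklt,
        aux_coeff_comp_top2 σ q₂ hr2 hq₂deg hklt] at h
    have hz : ∀ q : ℝ[X], q.natDegree ≤ r → (q ^ (r-1)).coeff (r * r) = 0 := by
      intro q hq
      apply Polynomial.coeff_eq_zero_of_natDegree_lt
      calc (q ^ (r-1)).natDegree ≤ (r-1) * q.natDegree := Polynomial.natDegree_pow_le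
        _ ≤ (r-1) * r := Nat.mul_le_mul_left _ hq
        _ < r * r := (Nat.mul_lt_mul_right (by omega)).mpr (by omega)
    rw [hz q₁ hq₁deg, hz q₂ hq₂deg, Polynomial.coeff_pow_of_natDegree_le hq₁deg,
        Polynomial.coeff_pow_of_natDegree_le hq₂deg, hq₁r, hq₂r] at h
    linarith [h]
  -- E2 : coefficient at r * r - 1
  have hE2 : (l₃ * u₃) * (σ.coeff r * ((r : ℝ) * (B * (A ^ r * σ.coeff r)) ^ (r-1)
        * (B * (A ^ (r-1) * σ.coeff (r-1)))))
      = u₃ * (σ.coeff r * ((r : ℝ) * (u₂ * (u₁ ^ r * σ.coeff r)) ^ (r-1)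
        * (u₂ * (u₁ ^ (r-1) * σ.coeff (r-1))))) := by
    have h := hcoeff (r * r - 1)
    have hklt : (r - 2) * r < r * r - 1 := by
      have h1 : (r - 2) * r < (r - 1) * r := (Nat.mul_lt_mul_right (by omega)).mpr (by omega)
      have h2 : (r - 1) * r ≤ r * r - 1 := by
        have : (r - 1) * r = r * r - r := by
          rw [Nat.sub_mul, one_mul]
        omega
      omega
    rw [aux_coeff_comp_top2 σ q₁ hr2 hq₁deg hklt,
        aux_coeff_comp_top2 σ q₂ hr2 hq₂deg hklt] at h
    have hz : ∀ q : ℝ[X], q.natDegree ≤ r → (q ^ (r-1)).coeff (r * r - 1) = 0 := by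
      intro q hq
      apply Polynomial.coeff_eq_zero_of_natDegree_lt
      have h3 : (q ^ (r-1)).natDegree ≤ (r-1) * r :=
        Polynomial.natDegree_pow_le.trans (Nat.mul_le_mul_left _ hq)
      have h4 : (r - 1) * r = r * r - r := by rw [Nat.sub_mul, one_mul]
      omega
    rw [hz q₁ hq₁deg, hz q₂ hq₂deg,
        aux_coeff_pow_sub_one q₁ hr1 hq₁deg r hr1,
        aux_coeff_pow_sub_one q₂ hr1 hq₂deg r hr1,
        hq₁r, hq₂r, hq₁r1, hq₂r1] at h
    linarith [h]
  -- nonvanishing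
  have hRHS : u₃ * (σ.coeff r * (u₂ * (u₁ ^ r * σ.coeff r)) ^ r) ≠ 0 :=
    mul_ne_zero hu₃ (mul_ne_zero hlead (pow_ne_zero _ (mul_ne_zero hu₂
      (mul_ne_zero (pow_ne_zero _ hu₁) hlead))))
  have hl₃ : l₃ ≠ 0 := by
    intro h; apply hRHS; rw [← hE1, h]; ring
  have hA0 : A ≠ 0 := by
    intro h; apply hRHS; rw [← hE1, h]; simp [zero_pow (show r ≠ 0 by omega)]
  have hB0 : B ≠ 0 := by
    intro h; apply hRHS; rw [← hE1, h]; simp [zero_pow (show r ≠ 0 by omega)]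
  -- rewrite exponents using r = s + 1
  have hs2 : 2 ≤ s := by omega
  simp only [hs, Nat.add_sub_cancel] at hE1 hE2
  have hlead' : σ.coeff (s + 1) ≠ 0 := by rwa [← hs]
  have hsub' : σ.coeff s ≠ 0 := by rw [← Nat.add_sub_cancel (n := s) (m := 1), ← hs]; exact hsub
  -- cancel common nonzero factors
  have e1 : l₃ * (B * (A ^ (s+1) * σ.coeff (s+1))) ^ (s+1)
      = (u₂ * (u₁ ^ (s+1) * σ.coeff (s+1))) ^ (s+1) := by
    apply mul_left_cancel₀ (mul_ne_zero hu₃ hlead')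
    linear_combination hE1
  have e2 : l₃ * ((B * (A ^ (s+1) * σ.coeff (s+1))) ^ s * (B * A ^ s))
      = (u₂ * (u₁ ^ (s+1) * σ.coeff (s+1))) ^ s * (u₂ * u₁ ^ s) := by
    apply mul_left_cancel₀ (mul_ne_zero (mul_ne_zero (mul_ne_zero hu₃ hlead')
      (show ((s+1 : ℕ) : ℝ) ≠ 0 from Nat.cast_ne_zero.mpr (by omega))) hsub')
    linear_combination hE2
  -- A = u₁
  have huA : A = u₁ := by
    apply mul_left_cancel₀ (show (u₂ * (u₁ ^ (s+1) * σ.coeff (s+1))) ^ s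
        * (u₂ * u₁ ^ s) * σ.coeff (s+1) ≠ 0 from
      mul_ne_zero (mul_ne_zero (pow_ne_zero _ (mul_ne_zero hu₂
        (mul_ne_zero (pow_ne_zero _ hu₁) hlead'))) (mul_ne_zero hu₂ (pow_ne_zero _ hu₁))) hlead')
    linear_combination e1 - (A * σ.coeff (s+1)) * e2
  have hl₁ : l₁ = 1 := by
    apply mul_right_cancel₀ hu₁
    rw [one_mul, ← hA]; exact huA
  -- stage 2
  have hττ : τ₁ = τ₂ := by rw [hτ₁, hτ₂, huA]
  have hqpow : ∀ (c : ℝ) (τ : ℝ[X]) (i k : ℕ),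
      ((C c * τ) ^ i).coeff k = c ^ i * (τ ^ i).coeff k := by
    intro c τ i k
    rw [mul_pow, ← Polynomial.C_pow, Polynomial.coeff_C_mul]
  have hτ₂deg : τ₂.natDegree ≤ s + 1 := by rw [← hs]; exact hτdeg u₁
  have hτ₂top : τ₂.coeff (s+1) = u₁ ^ (s+1) * σ.coeff (s+1) := by
    rw [hτ₂, aux_coeff_comp_C_mul_X, ← hs]
  have hF := hcoeff (s * (s + 1))
  have hklt : (r - 2) * r < s * (s + 1) := by
    rw [hs, show s + 1 - 2 = s - 1 by omega]
    exact (Nat.mul_lt_mul_right (by omega)).mpr (by omega)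
  rw [aux_coeff_comp_top2 σ q₁ hr2 hq₁deg hklt,
      aux_coeff_comp_top2 σ q₂ hr2 hq₂deg hklt] at hF
  simp only [← hrdef, hs, Nat.add_sub_cancel] at hF
  rw [hq₁, hq₂, hqpow, hqpow, hqpow, hqpow, hττ,
      Polynomial.coeff_pow_of_natDegree_le hτ₂deg, hτ₂top] at hF
  -- f1 : l₃ * B^(s+1) = u₂^(s+1)
  rw [huA] at e1
  have f1 : l₃ * B ^ (s+1) = u₂ ^ (s+1) := by
    apply mul_right_cancel₀ (pow_ne_zero (s+1) (mul_ne_zero (pow_ne_zero (s+1) hu₁) hlead'))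
    linear_combination e1
  have f3 : l₃ * B ^ s = u₂ ^ s := by
    apply mul_left_cancel₀ (show u₃ * σ.coeff s * (u₁ ^ (s+1) * σ.coeff (s+1)) ^ s ≠ 0 from
      mul_ne_zero (mul_ne_zero hu₃ hsub') (pow_ne_zero _ (mul_ne_zero (pow_ne_zero _ hu₁) hlead')))
    linear_combination hF - (u₃ * σ.coeff (s+1) * ((τ₂ ^ (s+1)).coeff (s * (s+1)))) * f1
  have hBu : B = u₂ := by
    apply mul_left_cancel₀ (show l₃ * B ^ s ≠ 0 from by rw [f3]; exact pow_ne_zero _ hu₂)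
    linear_combination f1 - u₂ * f3
  have hl₂ : l₂ = 1 := by
    apply mul_right_cancel₀ hu₂
    rw [one_mul, ← hB]; exact hBu
  have hl₃1 : l₃ = 1 := by
    rw [hBu] at f3
    apply mul_right_cancel₀ (pow_ne_zero s hu₂)
    rw [one_mul]; exact f3
  exact ⟨hl₁, hl₂, hl₃1⟩
end

section
/- Let φ : ℝ^m → ℝ^n be a polynomial map, S ⊆ ℝ^m a subset contained in an algebraic subvariety of dimension d, and suppose that for every w ∈ S the differential Dφ(w) has rank m (φ is an immersion on S) and every fiber of φ over φ(S) is finite. Then the set U_S = ∪_{w ∈ S} (φ(w) + im(Dφ(w))^⊥) has dimension at most d + n − m; in particular, if d < m then U_S has empty interior in ℝ^n. -/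
open scoped ENNReal NNReal
open Set MeasureTheory EMetric Filter Module
set_option maxHeartbeats 1000000
noncomputable section

section helpers
lemma diam_prod_le' {X Y : Type*} [PseudoEMetricSpace X] [PseudoEMetricSpace Y]
    (s : Set X) (t : Set Y) : diam (s ×ˢ t) ≤ max (diam s) (diam t) := by
  apply diam_le
  rintro ⟨x1, y1⟩ ⟨hx1, hy1⟩ ⟨x2, y2⟩ ⟨hx2, hy2⟩
  rw [Prod.edist_eq]
  exact max_le_max (edist_le_diam_of_mem hx1 hx2) (edist_le_diam_of_mem hy1 hy2)

lemma exists_cover_of_hM_zero {X : Type*} [EMetricSpace X] [MeasurableSpace X] [BorelSpace X]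
    {A : Set X} {s : ℝ} (hs : 0 < s) (hA : μH[s] A = 0) (ρ η : ℝ≥0∞) (hρ : 0 < ρ)
    (hη : 0 < η) :
    ∃ c : ℕ → Set X, (A ⊆ ⋃ i, c i) ∧ (∀ i, diam (c i) ≤ ρ) ∧
      ∑' i, (diam (c i)) ^ s ≤ η := by
  rw [MeasureTheory.Measure.hausdorffMeasure_apply] at hA
  have h1 : (⨅ (t : ℕ → Set X) (_ : A ⊆ ⋃ n, t n) (_ : ∀ n, diam (t n) ≤ ρ),
      ∑' n, ⨆ _ : (t n).Nonempty, diam (t n) ^ s) < η := by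
    refine lt_of_le_of_lt ?_ hη
    rw [← hA]
    exact le_iSup₂ (f := fun r (_ : 0 < r) => ⨅ (t : ℕ → Set X) (_ : A ⊆ ⋃ n, t n)
      (_ : ∀ n, diam (t n) ≤ r), ∑' n, ⨆ _ : (t n).Nonempty, diam (t n) ^ s) ρ hρ
  rw [iInf_lt_iff] at h1
  obtain ⟨c, h1⟩ := h1
  rw [iInf_lt_iff] at h1
  obtain ⟨hc1, h1⟩ := h1
  rw [iInf_lt_iff] at h1
  obtain ⟨hc2, h1⟩ := h1
  refine ⟨c, hc1, hc2, le_of_eq ?_ |>.trans h1.le⟩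
  refine tsum_congr fun i => ?_
  by_cases h : (c i).Nonempty
  · simp [h]
  · rw [not_nonempty_iff_eq_empty] at h
    simp [h, EMetric.diam, ENNReal.zero_rpow_of_pos hs]

lemma box_diam_le {k : ℕ} (lo : Fin k → ℝ) (δ : ℝ) (hδ : 0 ≤ δ) :
    diam (Set.Icc lo (fun l => lo l + δ)) ≤ ENNReal.ofReal δ := by
  apply diam_le
  intro x hx y hy
  rw [Set.mem_Icc] at hx hy
  simp only [Pi.le_def] at hx hy
  rw [edist_le_ofReal hδ, dist_pi_le_iff hδ]
  intro l
  rw [Real.dist_eq, abs_sub_le_iff]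
  constructor
  · linarith [hx.2 l, hy.1 l]
  · linarith [hy.2 l, hx.1 l]

lemma tsum_two_inv_pow_succ : ∑' i : ℕ, ((2:ℝ≥0∞))⁻¹ ^ (i+1) = 1 := by
  have h : ∀ i : ℕ, ((2:ℝ≥0∞))⁻¹ ^ (i+1) = (2:ℝ≥0∞)⁻¹ ^ i * 2⁻¹ := fun i => pow_succ _ _
  rw [tsum_congr h, ENNReal.tsum_mul_right, ENNReal.tsum_geometric]
  have h2 : (1:ℝ≥0∞) - 2⁻¹ = 2⁻¹ := by
    refine ENNReal.sub_eq_of_eq_add (by simp) ?_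
    rw [ENNReal.inv_two_add_inv_two]
  rw [h2, inv_inv]
  exact ENNReal.mul_inv_cancel (by norm_num) (by norm_num)
end helpers

lemma hM_prod_zero {X : Type*} [MetricSpace X] [MeasurableSpace X] [BorelSpace X]
    [SecondCountableTopology X] (k : ℕ) (A : Set X) (s : ℝ≥0) (hs : 0 < s) (R : ℕ)
    (hA : μH[(s:ℝ)] A = 0) :
    μH[(s:ℝ) + k] (A ×ˢ (Set.Icc (fun _ => -(R:ℝ)) (fun _ => (R:ℝ)) : Set (Fin k → ℝ))) = 0 := by
  have hsR : (0:ℝ) < (s:ℝ) := hs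
  have hE : (0:ℝ) < (s:ℝ) + k := by positivity
  set Q : Set (Fin k → ℝ) := Set.Icc (fun _ => -(R:ℝ)) (fun _ => (R:ℝ)) with hQdef
  refine le_antisymm ?_ zero_le
  have h0 : μH[(s:ℝ) + k] (A ×ˢ Q) ≤ 0 := by
    refine ENNReal.le_of_forall_pos_le_add fun ε hε _ => ?_
    rw [zero_add]
    set C : ℝ≥0∞ := ENNReal.ofReal (2*R+2) ^ k with hCdef
    have hC0 : C ≠ 0 := by
      rw [hCdef]
      apply pow_ne_zero
      simp only [ne_eq, ENNReal.ofReal_eq_zero, not_le]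
      positivity
    have hCtop : C ≠ ⊤ := by
      rw [hCdef]; exact ENNReal.pow_ne_top ENNReal.ofReal_ne_top
    set η : ℝ≥0∞ := min 1 ((ε:ℝ≥0∞) / (2 * C)) with hηdef
    have hη0 : 0 < η := by
      refine lt_min one_pos (ENNReal.div_pos ?_ ?_)
      · exact_mod_cast hε.ne'
      · exact ENNReal.mul_ne_top (by norm_num) hCtop
    have hη1 : η ≤ 1 := min_le_left _ _
    have hηtop : η ≠ ⊤ := (hη1.trans_lt ENNReal.one_lt_top).ne
    suffices h : μH[(s:ℝ)+k] (A ×ˢ Q) ≤ 2 * C * η by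
      refine h.trans ?_
      calc 2*C*η ≤ 2*C*((ε:ℝ≥0∞)/(2*C)) := mul_le_mul_right (min_le_right _ _) _
      _ ≤ ε := ENNReal.mul_div_le
    -- covers of A at all scales
    have hρ0 : ∀ b : ℕ, (0:ℝ≥0∞) < ((b:ℝ≥0∞)+1)⁻¹ := by
      intro b
      rw [ENNReal.inv_pos]
      exact ENNReal.add_ne_top.2 ⟨ENNReal.natCast_ne_top b, ENNReal.one_ne_top⟩
    have hρ1 : ∀ b : ℕ, ((b:ℝ≥0∞)+1)⁻¹ ≤ 1 := by
      intro b
      rw [ENNReal.inv_le_one]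
      exact le_add_self
    have hcov := fun b : ℕ => exists_cover_of_hM_zero hsR hA ((b:ℝ≥0∞)+1)⁻¹ η (hρ0 b) hη0
    choose c hc1 hc2 hc3 using hcov
    set eps : ℕ → ℕ → ℝ≥0∞ := fun b i =>
      min ((b:ℝ≥0∞)+1)⁻¹ (η ^ (s:ℝ)⁻¹ * (2:ℝ≥0∞)⁻¹ ^ ((s:ℝ)⁻¹ * ((i:ℝ)+1))) with hepsdef
    set D : ℕ → ℕ → ℝ≥0∞ := fun b i => max (diam (c b i)) (eps b i) with hDdef
    have heps0 : ∀ b i, 0 < eps b i := by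
      intro b i
      refine lt_min (hρ0 b) (ENNReal.mul_pos ?_ ?_)
      · exact (ENNReal.rpow_pos hη0 hηtop).ne'
      · exact (ENNReal.rpow_pos (by norm_num) (by norm_num)).ne'
    have hD0 : ∀ b i, 0 < D b i := fun b i => (heps0 b i).trans_le (le_max_right _ _)
    have hDρ : ∀ b i, D b i ≤ ((b:ℝ≥0∞)+1)⁻¹ := fun b i => max_le (hc2 b i) (min_le_left _ _)
    have hD1 : ∀ b i, D b i ≤ 1 := fun b i => (hDρ b i).trans (hρ1 b)
    have hDtop : ∀ b i, D b i ≠ ⊤ := fun b i => ((hD1 b i).trans_lt ENNReal.one_lt_top).ne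
    set δ : ℕ → ℕ → ℝ := fun b i => (D b i).toReal with hδdef
    have hδ0 : ∀ b i, 0 < δ b i := fun b i => ENNReal.toReal_pos (hD0 b i).ne' (hDtop b i)
    have hδ1 : ∀ b i, δ b i ≤ 1 := by
      intro b i
      rw [hδdef]
      exact ENNReal.toReal_le_of_le_ofReal one_pos.le (by simpa using hD1 b i)
    have hofδ : ∀ b i, ENNReal.ofReal (δ b i) = D b i := fun b i =>
      ENNReal.ofReal_toReal (hDtop b i)
    set M : ℕ → ℕ → ℕ := fun b i => ⌈2*(R:ℝ) / δ b i⌉₊ with hMdef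
    set box : ℕ → ℕ → (Fin k → ℕ) → Set (Fin k → ℝ) := fun b i a =>
      Set.Icc (fun l => -(R:ℝ) + a l * δ b i) (fun l => (-(R:ℝ) + a l * δ b i) + δ b i)
      with hboxdef
    set t : ℕ → ℕ × (Fin k → ℕ) → Set (X × (Fin k → ℝ)) := fun b p =>
      (c b p.1) ×ˢ (box b p.1 p.2 ∩ Q) with htdef
    -- diameters of pieces
    have hdiam_t : ∀ b p, diam (t b p) ≤ ((b:ℝ≥0∞)+1)⁻¹ := by
      rintro b ⟨i, a⟩
      refine (diam_prod_le' _ _).trans (max_le ((hc2 b i)) ?_)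
      refine ((diam_mono inter_subset_left).trans ?_)
      refine ((box_diam_le _ _ (hδ0 b i).le).trans ?_)
      rw [hofδ]
      exact hDρ b i
    -- coverage
    have hst : ∀ b : ℕ, (A ×ˢ Q : Set (X × (Fin k → ℝ))) ⊆ ⋃ p, t b p := by
      intro b
      rintro ⟨x, y⟩ ⟨hx, hyQ⟩
      obtain ⟨i, hi⟩ := mem_iUnion.1 (hc1 b hx)
      have hy' : ∀ l, -(R:ℝ) ≤ y l ∧ y l ≤ R := by
        intro l
        rw [hQdef, Set.mem_Icc] at hyQ
        exact ⟨hyQ.1 l, hyQ.2 l⟩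
      set a : Fin k → ℕ := fun l => ⌊(y l + R) / δ b i⌋₊ with hadef
      refine mem_iUnion.2 ⟨(i, a), hi, ?_, hyQ⟩
      rw [hboxdef, Set.mem_Icc]
      constructor <;> intro l
      · have h1 : (a l : ℝ) ≤ (y l + R) / δ b i :=
          Nat.floor_le (div_nonneg (by linarith [(hy' l).1]) (hδ0 b i).le)
        have h2 : (a l : ℝ) * δ b i ≤ y l + R := by
          rw [← le_div_iff₀ (hδ0 b i)]
          exact h1
        simp only []
        linarith
      · have h1 : (y l + R) / δ b i < (a l : ℝ) + 1 := Nat.lt_floor_add_one _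
        have h2 : y l + R < ((a l : ℝ) + 1) * δ b i := by
          rw [← div_lt_iff₀ (hδ0 b i)]
          exact h1
        have h3 : ((a l : ℝ) + 1) * δ b i = (a l : ℝ) * δ b i + δ b i := by ring
        simp only []
        linarith
    -- per-scale sum bound
    have hsum : ∀ b : ℕ, ∑' p : ℕ × (Fin k → ℕ), diam (t b p) ^ ((s:ℝ)+k) ≤ 2 * C * η := by
      intro b
      have inner : ∀ i : ℕ, ∑' a : Fin k → ℕ, diam (t b (i, a)) ^ ((s:ℝ)+k)
          ≤ C * (D b i) ^ (s:ℝ) := by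
        intro i
        have hMδ : 2*(R:ℝ) ≤ (M b i) * δ b i := by
          rw [← div_le_iff₀ (hδ0 b i)]
          exact Nat.le_ceil _
        have hsupp : ∀ a ∉ Fintype.piFinset (fun _ : Fin k => Finset.range (M b i + 1)),
            diam (t b (i, a)) ^ ((s:ℝ)+k) = 0 := by
          intro a ha
          rw [Fintype.mem_piFinset] at ha
          push_neg at ha
          obtain ⟨l, hl⟩ := ha
          rw [Finset.mem_range, not_lt] at hl
          have hbox : box b i a ∩ Q = ∅ := by
            rw [eq_empty_iff_forall_notMem]
            rintro y ⟨hy1, hy2⟩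
            rw [hboxdef, Set.mem_Icc] at hy1
            have h1 : -(R:ℝ) + a l * δ b i ≤ y l := hy1.1 l
            have h2 : y l ≤ R := by
              rw [hQdef, Set.mem_Icc] at hy2
              exact hy2.2 l
            have h3 : ((M b i : ℝ) + 1) ≤ (a l : ℝ) := by exact_mod_cast hl
            have h4 : ((M b i : ℝ) + 1) * δ b i ≤ (a l : ℝ) * δ b i :=
              mul_le_mul_of_nonneg_right h3 (hδ0 b i).le
            nlinarith [hδ0 b i, hMδ]
          rw [htdef]
          simp only [hbox, Set.prod_empty, EMetric.diam, diam_empty]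
          exact ENNReal.zero_rpow_of_pos hE
        rw [tsum_eq_sum hsupp]
        have term_bound : ∀ a ∈ Fintype.piFinset (fun _ : Fin k => Finset.range (M b i + 1)),
            diam (t b (i, a)) ^ ((s:ℝ)+k) ≤ (D b i) ^ ((s:ℝ)+k) := by
          intro a _
          refine ENNReal.rpow_le_rpow ?_ hE.le
          refine (diam_prod_le' _ _).trans (max_le (le_max_left _ _) ?_)
          refine (diam_mono inter_subset_left).trans ?_
          refine (box_diam_le _ _ (hδ0 b i).le).trans ?_
          rw [hofδ]
        refine (Finset.sum_le_sum term_bound).trans ?_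
        rw [Finset.sum_const, Fintype.card_piFinset]
        simp only [Finset.card_range, Finset.prod_const, Finset.card_univ, Fintype.card_fin]
        rw [nsmul_eq_mul]
        -- ((M+1)^k : ℕ) * D^(s+k) ≤ C * D^s
        have hsplit : (D b i) ^ ((s:ℝ)+k) = (D b i) ^ (s:ℝ) * (D b i) ^ (k:ℕ) := by
          rw [ENNReal.rpow_add _ _ (hD0 b i).ne' (hDtop b i), ← ENNReal.rpow_natCast (D b i) k]
        rw [hsplit]
        have hkey : ((M b i + 1 : ℕ) : ℝ≥0∞) * D b i ≤ ENNReal.ofReal (2*R+2) := by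
          rw [← hofδ b i, ← ENNReal.ofReal_natCast, ← ENNReal.ofReal_mul (by positivity)]
          refine ENNReal.ofReal_le_ofReal ?_
          have hceil : (M b i : ℝ) ≤ 2*R/δ b i + 1 :=
            (Nat.ceil_lt_add_one (by positivity)).le
          have h5 : ((M b i : ℕ) + 1 : ℝ) * δ b i ≤ (2*R/δ b i + 2) * δ b i := by
            refine mul_le_mul_of_nonneg_right ?_ (hδ0 b i).le
            push_cast
            linarith
          have h6 : (2*R/δ b i) * δ b i = 2*R := div_mul_cancel₀ _ (hδ0 b i).ne'
          have h7 : (2*R/δ b i + 2) * δ b i = 2*R + 2 * δ b i := by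
            rw [add_mul, h6]
          push_cast at h5 ⊢
          rw [h7] at h5
          nlinarith [hδ1 b i]
        calc ((M b i + 1)^k : ℕ) * ((D b i) ^ (s:ℝ) * (D b i) ^ (k:ℕ))
            = (((M b i + 1 : ℕ) : ℝ≥0∞) * D b i)^(k:ℕ) * (D b i) ^ (s:ℝ) := by
              push_cast
              rw [mul_pow]
              ring
          _ ≤ (ENNReal.ofReal (2*R+2))^(k:ℕ) * (D b i) ^ (s:ℝ) := by
              exact mul_le_mul_left (pow_le_pow_left' hkey k) _
          _ = C * (D b i) ^ (s:ℝ) := by rw [hCdef]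
      have inner2 : ∑' i : ℕ, (D b i) ^ (s:ℝ) ≤ 2 * η := by
        have per : ∀ i : ℕ, (D b i) ^ (s:ℝ) ≤ diam (c b i) ^ (s:ℝ) + eps b i ^ (s:ℝ) := by
          intro i
          rcases max_cases (diam (c b i)) (eps b i) with ⟨h, _⟩ | ⟨h, _⟩ <;>
            · rw [hDdef]; simp only []; rw [h]
              first | exact le_add_self | exact self_le_add_right _ _ |
                exact self_le_add_left _ _
        have eps_sum : ∑' i : ℕ, eps b i ^ (s:ℝ) ≤ η := by
          have per2 : ∀ i : ℕ, eps b i ^ (s:ℝ) ≤ η * (2:ℝ≥0∞)⁻¹ ^ (i+1) := by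
            intro i
            have h1 : eps b i ≤ η ^ (s:ℝ)⁻¹ * (2:ℝ≥0∞)⁻¹ ^ ((s:ℝ)⁻¹ * ((i:ℝ)+1)) :=
              min_le_right _ _
            refine (ENNReal.rpow_le_rpow h1 hsR.le).trans ?_
            rw [ENNReal.mul_rpow_of_nonneg _ _ hsR.le]
            rw [← ENNReal.rpow_natCast ((2:ℝ≥0∞)⁻¹) (i+1)]
            rw [← ENNReal.rpow_mul, ← ENNReal.rpow_mul]
            rw [inv_mul_cancel₀ hsR.ne', ENNReal.rpow_one]
            refine mul_le_mul_right (le_of_eq ?_) _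
            congr 1
            push_cast
            field_simp
          refine (ENNReal.tsum_le_tsum per2).trans ?_
          rw [ENNReal.tsum_mul_left, tsum_two_inv_pow_succ, mul_one]
        calc ∑' i : ℕ, (D b i) ^ (s:ℝ)
            ≤ ∑' i : ℕ, (diam (c b i) ^ (s:ℝ) + eps b i ^ (s:ℝ)) := ENNReal.tsum_le_tsum per
          _ = (∑' i : ℕ, diam (c b i) ^ (s:ℝ)) + ∑' i : ℕ, eps b i ^ (s:ℝ) :=
              ENNReal.tsum_add
          _ ≤ η + η := add_le_add (hc3 b) eps_sum
          _ = 2 * η := (two_mul η).symm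
      calc ∑' p : ℕ × (Fin k → ℕ), diam (t b p) ^ ((s:ℝ)+k)
          = ∑' i : ℕ, ∑' a : Fin k → ℕ, diam (t b (i, a)) ^ ((s:ℝ)+k) := ENNReal.tsum_prod (f := fun i a => diam (t b (i, a)) ^ ((s:ℝ)+k))
        _ ≤ ∑' i : ℕ, C * (D b i) ^ (s:ℝ) := ENNReal.tsum_le_tsum inner
        _ = C * ∑' i : ℕ, (D b i) ^ (s:ℝ) := ENNReal.tsum_mul_left
        _ ≤ C * (2 * η) := mul_le_mul_right inner2 _
        _ = 2 * C * η := by ring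
    -- apply the liminf bound
    have hmain := MeasureTheory.Measure.hausdorffMeasure_le_liminf_tsum (X := X × (Fin k → ℝ))
      ((s:ℝ)+k) (A ×ˢ Q) (l := atTop) (fun b : ℕ => ((b:ℝ≥0∞))⁻¹)
      ENNReal.tendsto_inv_nat_nhds_zero t
      (Eventually.of_forall fun b p => (hdiam_t b p).trans
        (ENNReal.inv_le_inv' (by exact_mod_cast Nat.le_succ b)))
      (Eventually.of_forall hst)
    refine hmain.trans ?_
    refine le_trans (liminf_le_liminf (Eventually.of_forall hsum)) ?_
    rw [liminf_const]
  exact h0.trans (le_refl 0)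
lemma dimH_prod_univ_le {X : Type*} [MetricSpace X] [MeasurableSpace X] [BorelSpace X]
    [SecondCountableTopology X] (A : Set X) (k : ℕ) :
    dimH (A ×ˢ (univ : Set (Fin k → ℝ))) ≤ dimH A + k := by
  have hQ : (univ : Set (Fin k → ℝ)) =
      ⋃ R : ℕ, Set.Icc (fun _ => -(R:ℝ)) (fun _ => (R:ℝ)) := by
    ext y
    simp only [mem_univ, true_iff, mem_iUnion, Set.mem_Icc]
    obtain ⟨R, hR⟩ := exists_nat_ge ‖y‖
    refine ⟨R, fun l => ?_, fun l => ?_⟩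
    · have := (abs_le.1 ((norm_le_pi_norm y l).trans hR)).1
      simpa using this
    · have := (abs_le.1 ((norm_le_pi_norm y l).trans hR)).2
      simpa using this
  rw [hQ, prod_iUnion, dimH_iUnion]
  refine iSup_le fun R => ?_
  rcases eq_or_ne (dimH A) ⊤ with h | h
  · rw [h, top_add]
    exact le_top
  · refine ENNReal.le_of_forall_pos_le_add fun ε hε _ => ?_
    set σ : ℝ≥0 := (dimH A).toNNReal + ε with hσdef
    have hσcoe : (σ : ℝ≥0∞) = dimH A + ε := by
      rw [hσdef, ENNReal.coe_add, ENNReal.coe_toNNReal h]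
    have hσ : dimH A < (σ : ℝ≥0∞) := by
      rw [hσcoe]
      exact ENNReal.lt_add_right h (by exact_mod_cast hε.ne')
    have hσ0 : 0 < σ := by
      have : (0:ℝ≥0) < ε := hε
      positivity
    have hμ : μH[(σ:ℝ)] A = 0 := hausdorffMeasure_of_dimH_lt hσ
    have h2 := hM_prod_zero k A σ hσ0 R hμ
    have h3 : dimH (A ×ˢ (Set.Icc (fun _ => -(R:ℝ)) (fun _ => (R:ℝ)) : Set (Fin k → ℝ)))
        ≤ ((σ + k : ℝ≥0) : ℝ≥0∞) := by
      refine dimH_le_of_hausdorffMeasure_ne_top ?_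
      have : ((σ + (k:ℝ≥0) : ℝ≥0) : ℝ) = (σ:ℝ) + k := by push_cast; ring
      rw [this, h2]
      exact ENNReal.zero_ne_top
    refine h3.trans ?_
    rw [ENNReal.coe_add, hσcoe]
    have : ((k:ℝ≥0) : ℝ≥0∞) = (k : ℝ≥0∞) := by push_cast; rfl
    rw [this]
    calc dimH A + ε + k = dimH A + k + ε := by ring
    _ ≤ dimH A + k + ε := le_refl _

lemma contDiff_mvpoly {m : ℕ} (q : MvPolynomial (Fin m) ℝ) (N : ℕ∞) :
    ContDiff ℝ N (fun x : EuclideanSpace ℝ (Fin m) => MvPolynomial.eval (fun j => x j) q) := by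
  induction q using MvPolynomial.induction_on with
  | C a => simpa [MvPolynomial.eval_C] using contDiff_const
  | add p q hp hq => simpa [MvPolynomial.eval_add] using hp.add hq
  | mul_X p j hp =>
      simp only [MvPolynomial.eval_mul, MvPolynomial.eval_X]
      exact hp.mul (contDiff_euclidean.1 contDiff_id j)

variable {m n : ℕ}

local notation "Em" => EuclideanSpace ℝ (Fin m)
local notation "En" => EuclideanSpace ℝ (Fin n)

def adjCLM {m n : ℕ} : (EuclideanSpace ℝ (Fin m) →L[ℝ] EuclideanSpace ℝ (Fin n))
    →L[ℝ] (EuclideanSpace ℝ (Fin n) →L[ℝ] EuclideanSpace ℝ (Fin m)) :=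
  LinearMap.toContinuousLinearMap
    { toFun := fun T => ContinuousLinearMap.adjoint T
      map_add' := fun T S => by simp [map_add]
      map_smul' := fun c T => by
        simp only [RingHom.id_apply]
        rw [LinearIsometryEquiv.map_smulₛₗ]
        congr 1 }

@[simp] lemma adjCLM_apply {m n : ℕ} (T : EuclideanSpace ℝ (Fin m) →L[ℝ] EuclideanSpace ℝ (Fin n)) :
    (adjCLM T : EuclideanSpace ℝ (Fin n) →L[ℝ] EuclideanSpace ℝ (Fin m))
      = ContinuousLinearMap.adjoint T := rfl

lemma chart_exists (φ : Em → En) (hφ : ContDiff ℝ 2 φ) (k : ℕ) (hk : m + k = n)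
    (S : Set Em) (himm : ∀ w ∈ S, Function.Injective (fderiv ℝ φ w))
    (w₀ : Em) (hw₀ : w₀ ∈ S) :
    ∃ V : Set Em, IsOpen V ∧ w₀ ∈ V ∧
      ∃ G : Em × (Fin k → ℝ) → En,
        (∀ x : Em × (Fin k → ℝ), x.1 ∈ V → ContDiffAt ℝ 1 G x) ∧
        (∀ w ∈ S ∩ V, (fun v => φ w + v) ''
            (((LinearMap.range (fderiv ℝ φ w).toLinearMap)ᗮ : Submodule ℝ En) : Set En)
          ⊆ G '' ((S ∩ V) ×ˢ (univ : Set (Fin k → ℝ)))) := by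
  set A : Em → Em →L[ℝ] En := fun w => fderiv ℝ φ w with hAdef
  have hA : ContDiff ℝ 1 A := hφ.fderiv_right (by norm_num)
  -- the reference normal space and a basis of it
  set N₀ : Submodule ℝ En := (LinearMap.range (A w₀).toLinearMap)ᗮ with hN₀def
  have hNk : finrank ℝ N₀ = k := by
    have h1 : finrank ℝ (LinearMap.range (A w₀).toLinearMap) = m := by
      rw [LinearMap.finrank_range_of_inj (himm w₀ hw₀), finrank_euclideanSpace_fin]
    have h2 := Submodule.finrank_add_finrank_orthogonal
      (K := (LinearMap.range (A w₀).toLinearMap)) (𝕜 := ℝ)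
    rw [h1, finrank_euclideanSpace_fin] at h2
    rw [← hN₀def] at h2
    omega
  set b : Basis (Fin k) ℝ N₀ := finBasisOfFinrankEq ℝ N₀ hNk with hbdef
  set ι₀ : (Fin k → ℝ) →L[ℝ] En :=
    ∑ i : Fin k, (ContinuousLinearMap.proj i).smulRight ((b i : En)) with hι₀def
  have hι₀app : ∀ c : Fin k → ℝ, ι₀ c = ∑ i : Fin k, c i • (b i : En) := by
    intro c
    rw [hι₀def, ContinuousLinearMap.sum_apply]
    refine Finset.sum_congr rfl fun i _ => rfl
  have hι₀mem : ∀ c, ι₀ c ∈ N₀ := by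
    intro c
    rw [hι₀app]
    exact Submodule.sum_mem _ fun i _ => Submodule.smul_mem _ _ (b i).2
  have hι₀inj : Function.Injective ι₀ := by
    rw [injective_iff_map_eq_zero]
    intro c hc
    rw [hι₀app] at hc
    have hc' : ((∑ i : Fin k, c i • b i : N₀) : En) = 0 := by
      push_cast
      exact hc
    have hc'' : (∑ i : Fin k, c i • b i : N₀) = 0 := Subtype.coe_injective (by simpa using hc')
    have := Fintype.linearIndependent_iff.1 b.linearIndependent c hc''
    funext i
    exact this i
  -- the family of candidate coordinate systems
  set B : Em → (Em × (Fin k → ℝ)) →L[ℝ] En := fun w =>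
    (A w).comp (ContinuousLinearMap.fst ℝ Em (Fin k → ℝ))
      + ι₀.comp (ContinuousLinearMap.snd ℝ Em (Fin k → ℝ)) with hBdef
  have hBapp : ∀ w a c, B w (a, c) = A w a + ι₀ c := by
    intro w a c
    simp [hBdef]
  have hBcont : Continuous B := by
    refine Continuous.add ?_ continuous_const
    exact hA.continuous.clm_comp continuous_const
  have hfr : finrank ℝ (Em × (Fin k → ℝ)) = finrank ℝ En := by
    rw [finrank_prod, finrank_euclideanSpace_fin, finrank_euclideanSpace_fin,
      finrank_fin_fun]
    omega
  have hB₀ : Function.Bijective (B w₀) := by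
    have hinj : Function.Injective (B w₀) := by
      rw [injective_iff_map_eq_zero]
      rintro ⟨a, c⟩ h
      rw [hBapp] at h
      have hu1 : A w₀ a ∈ LinearMap.range (A w₀).toLinearMap := ⟨a, rfl⟩
      have hu2 : A w₀ a ∈ N₀ := by
        have : A w₀ a = -ι₀ c := by
          rw [eq_neg_iff_add_eq_zero]; exact h
        rw [this]
        exact neg_mem (hι₀mem c)
      have h0 : A w₀ a = 0 := by
        have := (Submodule.mem_orthogonal _ _).1 hu2 _ hu1
        exact inner_self_eq_zero.1 this
      have ha : a = 0 := by
        apply himm w₀ hw₀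
        rw [h0, map_zero]
      have hc : c = 0 := by
        apply hι₀inj
        have : ι₀ c = 0 := by
          rw [ha, map_zero, zero_add] at h; exact h
        rw [this, map_zero]
      simp [ha, hc]
    refine ⟨hinj, ?_⟩
    have := (LinearMap.injective_iff_surjective_of_finrank_eq_finrank
      (f := (B w₀).toLinearMap) hfr).1 hinj
    exact this
  set e₀ : (Em × (Fin k → ℝ)) ≃L[ℝ] En :=
    LinearEquiv.toContinuousLinearEquiv (LinearEquiv.ofBijective (B w₀).toLinearMap hB₀)
    with he₀def
  have he₀app : ∀ x, e₀ x = B w₀ x := fun x => rfl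
  set F : Em → (Em × (Fin k → ℝ)) →L[ℝ] (Em × (Fin k → ℝ)) := fun w =>
    ((e₀.symm : En →L[ℝ] (Em × (Fin k → ℝ)))).comp (B w) with hFdef
  have hFcont : Continuous F := continuous_const.clm_comp hBcont
  set V : Set Em := F ⁻¹' {T | IsUnit T} with hVdef
  have hVopen : IsOpen V := Units.isOpen.preimage hFcont
  have hw₀V : w₀ ∈ V := by
    have : F w₀ = 1 := by
      refine ContinuousLinearMap.ext fun x => ?_
      show e₀.symm (B w₀ x) = x
      rw [← he₀app, e₀.symm_apply_apply]
    show IsUnit (F w₀)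
    rw [this]
    exact isUnit_one
  -- for w ∈ V, B w is bijective
  have hBbij : ∀ w ∈ V, Function.Bijective (B w) := by
    intro w hw
    obtain ⟨u, hu⟩ := hw
    have h1 : ∀ x, (↑u⁻¹ : (Em × (Fin k → ℝ)) →L[ℝ] (Em × (Fin k → ℝ))) ((F w) x) = x := by
      intro x
      rw [← hu, ← ContinuousLinearMap.mul_apply, u.inv_mul, ContinuousLinearMap.one_apply]
    have h2 : ∀ x, (F w) ((↑u⁻¹ : (Em × (Fin k → ℝ)) →L[ℝ] _) x) = x := by
      intro x
      rw [← hu, ← ContinuousLinearMap.mul_apply, u.mul_inv, ContinuousLinearMap.one_apply]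
    have hFbij : Function.Bijective (F w) :=
      ⟨Function.LeftInverse.injective h1, Function.RightInverse.surjective h2⟩
    have hcomp : ⇑(B w) = ⇑e₀ ∘ ⇑(F w) := by
      funext x
      show B w x = e₀ (e₀.symm (B w x))
      rw [e₀.apply_symm_apply]
    rw [hcomp]
    exact e₀.bijective.comp hFbij
  have hAinj : ∀ w ∈ V, Function.Injective (A w) := by
    intro w hw a a' h
    have : B w (a, 0) = B w (a', 0) := by
      rw [hBapp, hBapp, h]
    have := (hBbij w hw).1 this
    exact congrArg Prod.fst this
  set M : Em → Em →L[ℝ] Em := fun w => (adjCLM (A w)).comp (A w) with hMdef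
  have hMapp : ∀ w x, M w x = ContinuousLinearMap.adjoint (A w) (A w x) := fun w x => rfl
  have hMunit : ∀ w ∈ V, IsUnit (M w) := by
    intro w hw
    have hinj : Function.Injective (M w) := by
      rw [injective_iff_map_eq_zero]
      intro a h
      have h1 : (inner ℝ a (M w a) : ℝ) = 0 := by rw [h, inner_zero_right]
      rw [hMapp, ContinuousLinearMap.adjoint_inner_right] at h1
      have : A w a = 0 := inner_self_eq_zero.1 h1
      apply hAinj w hw
      rw [this, map_zero]
    have hbij : Function.Bijective (M w) :=
      ⟨hinj, (LinearMap.injective_iff_surjective_of_finrank_eq_finrank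
        (f := (M w).toLinearMap) rfl).1 hinj⟩
    set eM : Em ≃L[ℝ] Em :=
      LinearEquiv.toContinuousLinearEquiv (LinearEquiv.ofBijective (M w).toLinearMap hbij)
    refine ⟨⟨M w, (eM.symm : Em →L[ℝ] Em), ?_, ?_⟩, rfl⟩
    · refine ContinuousLinearMap.ext fun x => ?_
      show M w (eM.symm x) = x
      have h9 : M w (eM.symm x) = eM (eM.symm x) := rfl
      rw [h9, eM.apply_symm_apply]
    · refine ContinuousLinearMap.ext fun x => ?_
      show eM.symm (M w x) = x
      have h9 : M w x = eM x := rfl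
      rw [h9, eM.symm_apply_apply]
  -- the chart map
  set G : Em × (Fin k → ℝ) → En := fun q =>
    φ q.1 + (ι₀ q.2 - (A q.1) ((Ring.inverse (M q.1)) ((adjCLM (A q.1)) (ι₀ q.2)))) with hGdef
  refine ⟨V, hVopen, hw₀V, G, ?_, ?_⟩
  · -- smoothness
    intro x hx
    have hAx : ContDiffAt ℝ 1 (fun q : Em × (Fin k → ℝ) => A q.1) x :=
      (hA.comp contDiff_fst).contDiffAt
    have hadjx : ContDiffAt ℝ 1 (fun q : Em × (Fin k → ℝ) => adjCLM (A q.1)) x :=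
      ((adjCLM.contDiff).comp (hA.comp contDiff_fst)).contDiffAt
    have hMx : ContDiffAt ℝ 1 (fun q : Em × (Fin k → ℝ) => M q.1) x := hadjx.clm_comp hAx
    have hinvx : ContDiffAt ℝ 1 (fun q : Em × (Fin k → ℝ) => Ring.inverse (M q.1)) x := by
      obtain ⟨u, hu⟩ := hMunit x.1 hx
      have : ContDiffAt ℝ 1 Ring.inverse (M x.1) := by
        rw [← hu]
        exact contDiffAt_ringInverse (𝕜 := ℝ) u
      exact this.comp x hMx
    have hιx : ContDiffAt ℝ 1 (fun q : Em × (Fin k → ℝ) => ι₀ q.2) x :=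
      (ι₀.contDiff.comp contDiff_snd).contDiffAt
    have h1 : ContDiffAt ℝ 1 (fun q : Em × (Fin k → ℝ) => (adjCLM (A q.1)) (ι₀ q.2)) x :=
      hadjx.clm_apply hιx
    have h2 : ContDiffAt ℝ 1
        (fun q : Em × (Fin k → ℝ) => (Ring.inverse (M q.1)) ((adjCLM (A q.1)) (ι₀ q.2))) x :=
      hinvx.clm_apply h1
    have h3 : ContDiffAt ℝ 1
        (fun q : Em × (Fin k → ℝ) =>
          (A q.1) ((Ring.inverse (M q.1)) ((adjCLM (A q.1)) (ι₀ q.2)))) x :=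
      hAx.clm_apply h2
    have hφx : ContDiffAt ℝ 1 (fun q : Em × (Fin k → ℝ) => φ q.1) x :=
      ((hφ.of_le (by norm_num)).comp contDiff_fst).contDiffAt
    exact hφx.add (hιx.sub h3)
  · -- coverage of the normal bundle
    rintro w ⟨hwS, hwV⟩
    have hMinv : ∀ x, M w (Ring.inverse (M w) x) = x := by
      intro x
      have h := Ring.mul_inverse_cancel (M w) (hMunit w hwV)
      rw [← ContinuousLinearMap.mul_apply, h, ContinuousLinearMap.one_apply]
    set Nw : Submodule ℝ En := (LinearMap.range (A w).toLinearMap)ᗮ with hNwdef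
    have hmem : ∀ v : En, v - A w ((Ring.inverse (M w)) ((adjCLM (A w)) v)) ∈ Nw := by
      intro v
      rw [hNwdef, Submodule.mem_orthogonal]
      rintro u ⟨a, rfl⟩
      rw [inner_sub_right]
      set z := (Ring.inverse (M w)) ((adjCLM (A w)) v) with hzdef
      have h1 : (inner ℝ ((A w).toLinearMap a) (A w z) : ℝ)
          = inner ℝ a (ContinuousLinearMap.adjoint (A w) v) := by
        show (inner ℝ (A w a) (A w z) : ℝ) = _
        rw [← ContinuousLinearMap.adjoint_inner_right]
        congr 1
        show ContinuousLinearMap.adjoint (A w) (A w z) = _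
        have : ContinuousLinearMap.adjoint (A w) (A w z) = M w z := rfl
        rw [this, hzdef, hMinv]
        rfl
      have h2 : (inner ℝ ((A w).toLinearMap a) v : ℝ)
          = inner ℝ a (ContinuousLinearMap.adjoint (A w) v) := by
        show (inner ℝ (A w a) v : ℝ) = _
        rw [ContinuousLinearMap.adjoint_inner_right]
      rw [h1, h2, sub_self]
    have hNwk : finrank ℝ Nw = k := by
      have h1 : finrank ℝ (LinearMap.range (A w).toLinearMap) = m := by
        rw [LinearMap.finrank_range_of_inj (himm w hwS), finrank_euclideanSpace_fin]
      have h2 := Submodule.finrank_add_finrank_orthogonal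
        (K := (LinearMap.range (A w).toLinearMap)) (𝕜 := ℝ)
      rw [h1, finrank_euclideanSpace_fin] at h2
      rw [← hNwdef] at h2
      omega
    set L : (Fin k → ℝ) →ₗ[ℝ] Nw :=
      { toFun := fun c =>
          ⟨ι₀ c - A w ((Ring.inverse (M w)) ((adjCLM (A w)) (ι₀ c))), hmem _⟩
        map_add' := fun c c' => by
          apply Subtype.ext
          simp only [Submodule.coe_add]
          rw [map_add ι₀, map_add (adjCLM (A w)), map_add (Ring.inverse (M w)), map_add (A w)]
          abel
        map_smul' := fun r c => by
          apply Subtype.ext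
          simp only [RingHom.id_apply, Submodule.coe_smul]
          rw [_root_.map_smul ι₀, _root_.map_smul (adjCLM (A w)),
            _root_.map_smul (Ring.inverse (M w)), _root_.map_smul (A w), smul_sub] } with hLdef
    have hLinj : Function.Injective L := by
      rw [injective_iff_map_eq_zero]
      intro c hc
      have hc' : ι₀ c - A w ((Ring.inverse (M w)) ((adjCLM (A w)) (ι₀ c))) = 0 := by
        have := congrArg (Subtype.val) hc
        simpa [hLdef] using this
      set z := (Ring.inverse (M w)) ((adjCLM (A w)) (ι₀ c)) with hzdef
      have hBz : B w (z, -c) = 0 := by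
        rw [hBapp, map_neg]
        rw [sub_eq_zero] at hc'
        rw [hc']
        exact add_neg_cancel _
      have h0 : (z, -c) = (0 : Em × (Fin k → ℝ)) := by
        apply (hBbij w hwV).1
        rw [hBz, map_zero]
      have : -c = (0 : Fin k → ℝ) := congrArg Prod.snd h0
      simpa using this
    have hLsurj : Function.Surjective L :=
      (LinearMap.injective_iff_surjective_of_finrank_eq_finrank
        (by rw [finrank_fin_fun, hNwk])).1 hLinj
    rintro x ⟨v, hv, rfl⟩
    obtain ⟨c, hc⟩ := hLsurj ⟨v, hv⟩
    refine ⟨(w, c), ⟨⟨hwS, hwV⟩, mem_univ _⟩, ?_⟩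
    have := congrArg (Subtype.val) hc
    simp only [hLdef] at this
    show φ w + _ = φ w + v
    rw [← this]
    rfl
end
section Main

open Module

/-- Let `φ : ℝᵐ → ℝⁿ` be a polynomial map, and `S ⊆ ℝᵐ` a subset of dimension at
most `d` (contained in a `d`-dimensional subvariety; dimension is formalized as
Hausdorff dimension). Assume `φ` is an immersion on `S` (its differential is
injective, i.e. of rank `m`) and that all fibers of `φ` over `φ(S)` are finite.
Then the union `U_S = ⋃_{w ∈ S} (φ(w) + im(Dφ(w))^⊥)` of the affine normal spaces
has dimension at most `d + (n − m)`; in particular, if `d < m`, then `U_S` has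
empty interior in `ℝⁿ`. -/
theorem stmt_19 (m n d : ℕ)
    (φ : EuclideanSpace ℝ (Fin m) → EuclideanSpace ℝ (Fin n))
    (p : Fin n → MvPolynomial (Fin m) ℝ)
    (hpoly : ∀ (x : EuclideanSpace ℝ (Fin m)) (i : Fin n),
      φ x i = MvPolynomial.eval (fun j => x j) (p i))
    (S : Set (EuclideanSpace ℝ (Fin m)))
    (hdim : dimH S ≤ (d : ℝ≥0∞))
    (himm : ∀ w ∈ S, Function.Injective (fderiv ℝ φ w))
    (hfib : ∀ v ∈ φ '' S, (φ ⁻¹' {v}).Finite)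
    (U : Set (EuclideanSpace ℝ (Fin n)))
    (hU : U = ⋃ w ∈ S, (fun v => φ w + v) ''
      (((LinearMap.range (fderiv ℝ φ w).toLinearMap)ᗮ :
        Submodule ℝ (EuclideanSpace ℝ (Fin n))) : Set (EuclideanSpace ℝ (Fin n)))) :
    dimH U ≤ ((d + (n - m) : ℕ) : ℝ≥0∞) ∧ (d < m → interior U = ∅) := by
  classical
  rcases S.eq_empty_or_nonempty with hSe | hSne
  · have hUe : U = ∅ := by simp [hU, hSe]
    rw [hUe]
    exact ⟨by simp [dimH_empty], fun _ => interior_empty⟩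
  obtain ⟨wex, hwex⟩ := hSne
  have hmn : m ≤ n := by
    have := LinearMap.finrank_le_finrank_of_injective
      (f := (fderiv ℝ φ wex).toLinearMap) (himm wex hwex)
    rwa [finrank_euclideanSpace_fin, finrank_euclideanSpace_fin] at this
  set k := n - m with hkdef
  have hk : m + k = n := by omega
  have hφ : ContDiff ℝ 2 φ := by
    rw [contDiff_euclidean]
    intro i
    have h : (fun x : EuclideanSpace ℝ (Fin m) => φ x i)
        = fun x => MvPolynomial.eval (fun j => x j) (p i) := funext fun x => hpoly x i
    rw [h]
    exact contDiff_mvpoly (p i) 2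
  have hchart := fun (w₀ : EuclideanSpace ℝ (Fin m)) (hw₀ : w₀ ∈ S) =>
    chart_exists φ hφ k hk S himm w₀ hw₀
  choose V hVopen hVmem G hGsmooth hGcov using hchart
  have hdim_chart : ∀ (w₀) (hw₀ : w₀ ∈ S),
      dimH (G w₀ hw₀ '' ((S ∩ V w₀ hw₀) ×ˢ (Set.univ : Set (Fin k → ℝ))))
        ≤ (d : ℝ≥0∞) + k := by
    intro w₀ hw₀
    refine le_trans (dimH_image_le_of_locally_lipschitzOn fun x hx => ?_) ?_
    · obtain ⟨K, t, ht, hlip⟩ :=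
        (hGsmooth w₀ hw₀ x (hx.1.2 : x.1 ∈ V w₀ hw₀)).exists_lipschitzOnWith
      exact ⟨K, t, mem_nhdsWithin_of_mem_nhds ht, hlip⟩
    · refine le_trans (dimH_prod_univ_le _ k) ?_
      exact add_le_add_left (le_trans (dimH_mono Set.inter_subset_left) hdim) _
  obtain ⟨T, hTc, hTeq⟩ := TopologicalSpace.isOpen_iUnion_countable
    (ι := S) (fun w => V w w.2) (fun w => hVopen w w.2)
  have hcover : U ⊆ ⋃ (w₀ : S) (_ : w₀ ∈ T),
      G w₀ w₀.2 '' ((S ∩ V w₀ w₀.2) ×ˢ (Set.univ : Set (Fin k → ℝ))) := by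
    rw [hU]
    refine Set.iUnion₂_subset fun w hw => ?_
    have hww : w ∈ ⋃ (i : S), V i i.2 := Set.mem_iUnion.2 ⟨⟨w, hw⟩, hVmem w hw⟩
    rw [← hTeq] at hww
    obtain ⟨i, hiT, hwi⟩ := Set.mem_iUnion₂.1 hww
    refine subset_trans (hGcov i i.2 w ⟨hw, hwi⟩) ?_
    exact Set.subset_iUnion₂ (s := fun (w₀ : S) (_ : w₀ ∈ T) =>
      G w₀ w₀.2 '' ((S ∩ V w₀ w₀.2) ×ˢ (Set.univ : Set (Fin k → ℝ)))) i hiT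
  have hdimU : dimH U ≤ (d : ℝ≥0∞) + k := by
    refine le_trans (dimH_mono hcover) ?_
    rw [dimH_bUnion hTc]
    exact iSup₂_le fun i _ => hdim_chart i i.2
  have hcast : ((d + (n - m) : ℕ) : ℝ≥0∞) = (d : ℝ≥0∞) + k := by
    rw [← hkdef]
    push_cast
    rfl
  constructor
  · rw [hcast]
    exact hdimU
  · intro hdm
    by_contra hne
    have h1 : dimH U = n := by
      have := Real.dimH_of_nonempty_interior (s := U)
        (Set.nonempty_iff_ne_empty.2 hne)
      rwa [finrank_euclideanSpace_fin] at this
    have h2 : (d : ℝ≥0∞) + k < n := by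
      have hlt : d + k < n := by omega
      calc (d : ℝ≥0∞) + k = ((d + k : ℕ) : ℝ≥0∞) := by push_cast; rfl
      _ < n := by exact_mod_cast hlt
    rw [h1] at hdimU
    exact absurd (hdimU.trans_lt h2) (lt_irrefl _)

end Main
end
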